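/- Let p and n be natural numbers, let P be a p × p integer matrix with det P ≠ 0, and let Q be a p × n integer matrix. Let A = (P | Q) be the p × (p + n) block matrix, regarded as a matrix over ℚ. For each j = 1, …, n, let u_j ∈ ℤ^(p+n) be the vector whose first p coordinates form the negative of the j-th column of adj(P) · Q and whose last n coordinates form det(P) times the j-th standard basis vector of ℤ^n. Then: (i) A u_j = 0 for each j; (ii) the vectors u_1, …, u_n span over ℚ the kernel of the linear map ℚ^(p+n) → ℚ^p given by x ↦ A x; (iii) each u_j has at most p + 1 nonzero coordinates; and (iv) if in addition every column of P and every column of Q has entries whose absolute values sum to at most 3, then every coordinate of every u_j has absolute value at most 3^p. -/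

import Mathlib

/-!
Since `P * adj P = det P • 1`, the vector `u_j = (-(adj P * Q) e_j, det P • e_j)` is annihilated
by `(P | Q)`. Conversely, if `P y + Q z = 0` then `det P • y = -(adj P * Q) z`, so
`(y, z) = ∑ⱼ (z_j / det P) • u_j`. By Cramer's rule the entries of `adj P * Q` are determinants of
`P` with one column replaced by a column of `Q`; expanding a determinant over permutations and
dominating by the sum over all maps shows `|det M| ≤ ∏ⱼ ∑ᵢ |M i j|`, which gives the bound `3 ^ p`.
-/

/-- The block matrix `A = (P | Q)` regarded over `ℚ`. -/
noncomputable def blockA (p n : ℕ) (P : Matrix (Fin p) (Fin p) ℤ)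
    (Q : Matrix (Fin p) (Fin n) ℤ) : Matrix (Fin p) (Fin p ⊕ Fin n) ℚ :=
  Matrix.fromCols (P.map fun x => (x : ℚ)) (Q.map fun x => (x : ℚ))

/-- The integral fundamental solution `u_j`: first `p` coordinates are the negative of the
`j`-th column of `adj(P) · Q`, last `n` coordinates are `det(P)` times the `j`-th
standard basis vector. -/
def uVec (p n : ℕ) (P : Matrix (Fin p) (Fin p) ℤ) (Q : Matrix (Fin p) (Fin n) ℤ)
    (j : Fin n) : (Fin p ⊕ Fin n) → ℤ :=
  Sum.elim (fun i => -((P.adjugate * Q) i j)) (fun k => if k = j then P.det else 0)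

open Finset

namespace Matrix

variable {m n R : Type*} [Fintype m] [DecidableEq m] [CommRing R]

section Hadamard

variable [LinearOrder R] [IsStrictOrderedRing R]

theorem abs_det_le_prod_sum_abs_col (M : Matrix m m R) : |M.det| ≤ ∏ j, ∑ i, |M i j| := by
  have habs_term : ∀ σ : Equiv.Perm m,
      |(Equiv.Perm.sign σ : R) * ∏ i, M (σ i) i| = ∏ i, |M (σ i) i| := fun σ => by
    rcases Int.units_eq_one_or (Equiv.Perm.sign σ) with h | h <;> simp [h, abs_prod]
  let coeEmb : Equiv.Perm m ↪ (m → m) := ⟨fun σ => σ, DFunLike.coe_injective⟩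
  calc |M.det| ≤ ∑ σ : Equiv.Perm m, |(Equiv.Perm.sign σ : R) * ∏ i, M (σ i) i| := by
        rw [det_apply']
        exact abs_sum_le_sum_abs _ _
    _ = ∑ f ∈ univ.map coeEmb, ∏ i, |M (f i) i| := by
        rw [sum_map]
        exact sum_congr rfl fun σ _ => habs_term σ
    _ ≤ ∑ f : m → m, ∏ i, |M (f i) i| :=
        sum_le_sum_of_subset_of_nonneg (subset_univ _) fun _ _ _ =>
          prod_nonneg fun _ _ => abs_nonneg _
    _ = ∏ j, ∑ i, |M i j| := (Fintype.prod_sum fun j i => |M i j|).symm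

theorem abs_det_le_pow_of_sum_abs_col_le (M : Matrix m m R) {c : R}
    (hM : ∀ j, ∑ i, |M i j| ≤ c) : |M.det| ≤ c ^ Fintype.card m :=
  calc |M.det| ≤ ∏ j, ∑ i, |M i j| := abs_det_le_prod_sum_abs_col M
    _ ≤ ∏ _j : m, c :=
        prod_le_prod (fun _ _ => sum_nonneg fun _ _ => abs_nonneg _) fun j _ => hM j
    _ = c ^ Fintype.card m := by rw [prod_const, card_univ]

end Hadamard

theorem adjugate_mul_apply_eq_det_updateCol (P : Matrix m m R) (Q : Matrix m n R) (i : m)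
    (j : n) : (P.adjugate * Q) i j = (P.updateCol i (Q.col j)).det := by
  rw [← cramer_apply, cramer_eq_adjugate_mulVec]
  rfl

section FundamentalSolution

variable [DecidableEq n]

def fundamentalSolution (P : Matrix m m R) (Q : Matrix m n R) (j : n) : m ⊕ n → R :=
  Sum.elim (-(P.adjugate * Q).col j) (Pi.single j P.det)

theorem map_fundamentalSolution {S : Type*} [CommRing S] (f : R →+* S) (P : Matrix m m R)
    (Q : Matrix m n R) (j : n) :
    f ∘ fundamentalSolution P Q j = fundamentalSolution (P.map f) (Q.map f) j := by
  ext (i | k)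
  · simp only [fundamentalSolution, Function.comp_apply, Sum.elim_inl, Pi.neg_apply, col_apply,
      map_neg, ← RingHom.mapMatrix_apply, ← RingHom.map_adjugate]
    simp [← Matrix.map_mul]
  · simp [fundamentalSolution, Pi.single_apply, apply_ite f, RingHom.map_det]

theorem abs_fundamentalSolution_le [LinearOrder R] [IsStrictOrderedRing R] {P : Matrix m m R}
    {Q : Matrix m n R} {c : R} (hP : ∀ j, ∑ i, |P i j| ≤ c) (hQ : ∀ j, ∑ i, |Q i j| ≤ c)
    (j : n) : ∀ x, |fundamentalSolution P Q j x| ≤ c ^ Fintype.card m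
  | .inl i => by
    rw [fundamentalSolution, Sum.elim_inl, Pi.neg_apply, abs_neg, col_apply,
      adjugate_mul_apply_eq_det_updateCol]
    refine abs_det_le_pow_of_sum_abs_col_le _ fun k => ?_
    rcases eq_or_ne k i with rfl | hki
    · simpa [updateCol_apply] using hQ j
    · simpa [updateCol_apply, hki] using hP k
  | .inr k => by
    rw [fundamentalSolution, Sum.elim_inr]
    rcases eq_or_ne k j with rfl | hkj
    · simpa using abs_det_le_pow_of_sum_abs_col_le P hP
    · rw [Pi.single_eq_of_ne hkj, abs_zero]
      exact (abs_nonneg _).trans (abs_det_le_pow_of_sum_abs_col_le P hP)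

variable [Fintype n]

theorem fromCols_mulVec_fundamentalSolution (P : Matrix m m R) (Q : Matrix m n R) (j : n) :
    fromCols P Q *ᵥ fundamentalSolution P Q j = 0 := by
  rw [fundamentalSolution, fromCols_mulVec_sumElim, ← mulVec_single_one, mulVec_neg,
    mulVec_mulVec, ← Matrix.mul_assoc, mul_adjugate, smul_mul, Matrix.one_mul]
  ext i
  simp [mul_comm]

theorem sum_smul_fundamentalSolution (P : Matrix m m R) (Q : Matrix m n R) (c : n → R) :
    ∑ j, c j • fundamentalSolution P Q j =
      Sum.elim (-((P.adjugate * Q) *ᵥ c)) (P.det • c) := by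
  ext (i | k)
  · simp [fundamentalSolution, mulVec, dotProduct, mul_comm]
  · simp [fundamentalSolution, Pi.single_apply, mul_comm]

theorem span_fundamentalSolution_eq_ker {K : Type*} [Field K] {P : Matrix m m K}
    (hP : P.det ≠ 0) (Q : Matrix m n K) :
    Submodule.span K (Set.range (fundamentalSolution P Q)) =
      LinearMap.ker (fromCols P Q).mulVecLin := by
  refine le_antisymm (Submodule.span_le.mpr ?_) fun x hx => ?_
  · rintro _ ⟨j, rfl⟩
    exact fromCols_mulVec_fundamentalSolution P Q j
  obtain ⟨y, z, rfl⟩ : ∃ y z, x = Sum.elim y z := ⟨x ∘ Sum.inl, x ∘ Sum.inr, by simp⟩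
  have hPy : P *ᵥ y = -(Q *ᵥ z) := by
    rwa [LinearMap.mem_ker, mulVecLin_apply, fromCols_mulVec_sumElim,
      add_eq_zero_iff_eq_neg] at hx
  refine (Submodule.mem_span_range_iff_exists_fun K).mpr ⟨P.det⁻¹ • z, ?_⟩
  rw [sum_smul_fundamentalSolution, smul_smul, mul_inv_cancel₀ hP, one_smul, mulVec_smul,
    ← mulVec_mulVec, ← smul_neg, ← mulVec_neg, ← hPy, mulVec_mulVec, adjugate_mul, smul_mulVec,
    one_mulVec, smul_smul, inv_mul_cancel₀ hP, one_smul]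

theorem card_support_fundamentalSolution_le [DecidableEq R] (P : Matrix m m R)
    (Q : Matrix m n R) (j : n) :
    #{x | fundamentalSolution P Q j x ≠ 0} ≤ Fintype.card m + 1 := by
  have hsub : ({x | fundamentalSolution P Q j x ≠ 0} : Finset (m ⊕ n)) ⊆
      univ.map .inl ∪ {.inr j} := by
    rintro (i | k) hk
    · simp
    · rw [mem_filter, fundamentalSolution, Sum.elim_inr] at hk
      obtain rfl : k = j := by_contra fun hkj => hk.2 (Pi.single_eq_of_ne hkj _)
      simp
  calc #{x | fundamentalSolution P Q j x ≠ 0} ≤ #(univ.map .inl ∪ {.inr j}) := card_le_card hsub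
    _ ≤ Fintype.card m + 1 := (card_union_le _ _).trans (by simp)

end FundamentalSolution

end Matrix

open Matrix

theorem uVec_eq_fundamentalSolution (p n : ℕ) (P : Matrix (Fin p) (Fin p) ℤ)
    (Q : Matrix (Fin p) (Fin n) ℤ) : uVec p n P Q = fundamentalSolution P Q := by
  ext j (i | k)
  · rfl
  · simp [uVec, fundamentalSolution, Pi.single_apply]

/-- The vectors `u_j` are integral fundamental solutions of `A u = 0`:
(i) `A u_j = 0`; (ii) they span the kernel of `x ↦ A x` over `ℚ`; (iii) each has at most
`p + 1` nonzero coordinates; (iv) under the column ℓ¹-bound `≤ 3` on `P` and `Q`, every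
coordinate has absolute value at most `3 ^ p`. -/
theorem fundamental_solutions (p n : ℕ) (P : Matrix (Fin p) (Fin p) ℤ)
    (Q : Matrix (Fin p) (Fin n) ℤ) (hdet : P.det ≠ 0) :
    (∀ j : Fin n,
      (blockA p n P Q).mulVec (fun x => ((uVec p n P Q j x : ℤ) : ℚ)) = 0) ∧
    (Submodule.span ℚ
        (Set.range fun j : Fin n => fun x => ((uVec p n P Q j x : ℤ) : ℚ)) =
      LinearMap.ker (blockA p n P Q).mulVecLin) ∧
    (∀ j : Fin n,
      (Finset.univ.filter fun x => uVec p n P Q j x ≠ 0).card ≤ p + 1) ∧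
    ((∀ j, ∑ i, |P i j| ≤ 3) → (∀ j, ∑ i, |Q i j| ≤ 3) →
      ∀ j x, |uVec p n P Q j x| ≤ 3 ^ p) := by
  let φ := Int.castRingHom ℚ
  have hA : blockA p n P Q = fromCols (P.map φ) (Q.map φ) := rfl
  have hu : ∀ j, (fun x => ((uVec p n P Q j x : ℤ) : ℚ)) =
      fundamentalSolution (P.map φ) (Q.map φ) j := fun j => by
    rw [uVec_eq_fundamentalSolution, ← map_fundamentalSolution]
    rfl
  have hrange : (fun j x => ((uVec p n P Q j x : ℤ) : ℚ)) =
      fundamentalSolution (P.map φ) (Q.map φ) := funext hu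
  have hdetℚ : (P.map φ).det ≠ 0 := by
    rw [← RingHom.mapMatrix_apply, ← RingHom.map_det]
    exact Int.cast_ne_zero.mpr hdet
  simp only [hA, hu, hrange]
  rw [uVec_eq_fundamentalSolution]
  refine ⟨fromCols_mulVec_fundamentalSolution _ _, span_fundamentalSolution_eq_ker hdetℚ _,
    fun j => ?_, fun hP hQ => ?_⟩
  · simpa using card_support_fundamentalSolution_le P Q j
  · simpa using abs_fundamentalSolution_le hP hQ
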